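/- arXiv:2111.10740 — 4 statements merged into one kernel-verified Lean document; each statement's English description precedes it below -/
import Mathlib

section
/- Let n ≥ 4 be an integer. For a polynomial h ∈ ℂ[u,v,t], the following are equivalent: (i) h lies in the ideal generated by u, v·t, and v² + t^{n−2} (the Jacobian ideal of the D_n normal form u² + t·v² + t^{n−2}·t after scaling); (ii) h(0,0,0) = 0, (∂_v h)(0,0,0) = 0, (∂_t^k h)(0,0,0) = 0 for every k with 1 ≤ k ≤ n−3, and (2·∂_t^{n−2} h − (n−2)!·∂_v² h)(0,0,0) = 0. -/
open MvPolynomial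

private lemma coeff_pderiv' (i : Fin 3) (d : Fin 3 →₀ ℕ) (p : MvPolynomial (Fin 3) ℂ) :
    coeff d (pderiv i p) = ((d i : ℂ) + 1) * coeff (d + Finsupp.single i 1) p := by
  induction p using MvPolynomial.induction_on' with
  | monomial s a =>
    rw [pderiv_monomial, coeff_monomial, coeff_monomial]
    by_cases hs : s = d + Finsupp.single i 1
    · subst hs
      rw [if_pos (add_tsub_cancel_right _ _), if_pos rfl]
      push_cast [Finsupp.add_apply, Finsupp.single_eq_same]
      ring
    · rw [if_neg hs, mul_zero]
      by_cases hd : s - Finsupp.single i 1 = d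
      · by_cases hsi : s i = 0
        · simp [hsi]
        · exfalso; apply hs
          rw [← hd, tsub_add_cancel_of_le]
          exact Finsupp.single_le_iff.mpr (Nat.one_le_iff_ne_zero.mpr hsi)
      · rw [if_neg hd]
  | add p q hp hq =>
    rw [map_add, coeff_add, coeff_add, hp, hq, mul_add]

private lemma eval0_iter (i : Fin 3) (k : ℕ) (p : MvPolynomial (Fin 3) ℂ) :
    eval (0 : Fin 3 → ℂ) ((⇑(pderiv i))^[k] p)
      = (k.factorial : ℂ) * coeff (Finsupp.single i k) p := by
  induction k generalizing p with
  | zero => simp [eval_zero, constantCoeff_eq]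
  | succ k ih =>
    rw [Function.iterate_succ_apply, ih, coeff_pderiv', Finsupp.single_eq_same,
      ← Finsupp.single_add, Nat.factorial_succ]
    push_cast; ring

private lemma mono_mem_of_le {I : Ideal (MvPolynomial (Fin 3) ℂ)} {e d : Fin 3 →₀ ℕ}
    (hg : (monomial e (1:ℂ)) ∈ I) (hle : e ≤ d) (c : ℂ) : (monomial d c) ∈ I := by
  have h : (monomial d c : MvPolynomial (Fin 3) ℂ) = monomial (d - e) c * monomial e 1 := by
    rw [monomial_mul, mul_one, tsub_add_cancel_of_le hle]
  rw [h]; exact I.mul_mem_left _ hg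

private lemma coeff_combo (m : ℕ) (A B Cc : MvPolynomial (Fin 3) ℂ) (d : Fin 3 →₀ ℕ)
    (h0 : d 0 = 0) (h12 : d 1 = 0 ∨ d 2 = 0) :
    coeff d (A * X 0 + (B * (X 1 * X 2) + Cc * ((X 1)^2 + (X 2)^m)))
      = (if Finsupp.single 1 2 ≤ d then coeff (d - Finsupp.single 1 2) Cc else 0)
      + (if Finsupp.single 2 m ≤ d then coeff (d - Finsupp.single 2 m) Cc else 0) := by
  have e0 : (X 0 : MvPolynomial (Fin 3) ℂ) = monomial (Finsupp.single 0 1) 1 := by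
    rw [← pow_one (X (0:Fin 3)), X_pow_eq_monomial]
  have e12 : (X 1 * X 2 : MvPolynomial (Fin 3) ℂ)
      = monomial (Finsupp.single 1 1 + Finsupp.single 2 1) 1 := by
    rw [← pow_one (X (1:Fin 3)), ← pow_one (X (2:Fin 3)), X_pow_eq_monomial, X_pow_eq_monomial,
      monomial_mul, mul_one]
  rw [e0, e12, mul_add, X_pow_eq_monomial, X_pow_eq_monomial, coeff_add, coeff_add, coeff_add,
    coeff_mul_monomial', coeff_mul_monomial', coeff_mul_monomial', coeff_mul_monomial']
  rw [if_neg, if_neg]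
  · simp only [mul_one, zero_add]
  · intro hle
    rcases h12 with h1 | h2
    · have := Finsupp.le_def.mp hle 1
      simp [Finsupp.single_apply, h1] at this
    · have := Finsupp.le_def.mp hle 2
      simp [Finsupp.single_apply, h2] at this
  · intro hle
    have := Finsupp.le_def.mp hle 0
    simp [Finsupp.single_apply, h0] at this

/-- The `D_n` case (`n ≥ 4`) of the characterization of the Jacobian ideal by
differential operators: `h ∈ ℂ[u,v,t]` lies in the ideal `(u, v·t, v² + t^{n−2})`
iff `h(0,0,0) = 0`, `(∂ᵥ h)(0,0,0) = 0`, `(∂ₜᵏ h)(0,0,0) = 0` for `1 ≤ k ≤ n−3`,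
and `(2·∂ₜ^{n−2} h − (n−2)!·∂ᵥ² h)(0,0,0) = 0`. -/
theorem dn_jacobian_ideal_iff_annihilated (n : ℕ) (hn : 4 ≤ n)
    (h : MvPolynomial (Fin 3) ℂ) :
    h ∈ Ideal.span ({X 0, X 1 * X 2, (X 1) ^ 2 + (X 2) ^ (n - 2)} :
        Set (MvPolynomial (Fin 3) ℂ)) ↔
      (eval (0 : Fin 3 → ℂ) h = 0 ∧
        eval (0 : Fin 3 → ℂ) (pderiv (1 : Fin 3) h) = 0 ∧
        (∀ k : ℕ, 1 ≤ k → k ≤ n - 3 →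
          eval (0 : Fin 3 → ℂ) ((⇑(pderiv (2 : Fin 3)))^[k] h) = 0) ∧
        2 * eval (0 : Fin 3 → ℂ) ((⇑(pderiv (2 : Fin 3)))^[n - 2] h) -
          (Nat.factorial (n - 2) : ℂ) *
            eval (0 : Fin 3 → ℂ) ((⇑(pderiv (1 : Fin 3)))^[2] h) = 0) := by
  have heval0 : eval (0 : Fin 3 → ℂ) h = coeff 0 h := by
    rw [eval_zero, constantCoeff_eq]
  have heval1 : eval (0 : Fin 3 → ℂ) (pderiv (1 : Fin 3) h)
      = coeff (Finsupp.single 1 1) h := by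
    have := eval0_iter 1 1 h
    rwa [Function.iterate_one, Nat.factorial_one, Nat.cast_one, one_mul] at this
  constructor
  · -- forward: ideal membership implies the vanishing conditions
    intro hmem
    rw [Ideal.mem_span_insert] at hmem
    obtain ⟨A, z, hz, rfl⟩ := hmem
    rw [Ideal.mem_span_insert] at hz
    obtain ⟨B, w, hw, rfl⟩ := hz
    rw [Ideal.mem_span_singleton'] at hw
    obtain ⟨Cc, rfl⟩ := hw
    set p := A * X 0 + (B * (X 1 * X 2) +
        Cc * ((X 1 : MvPolynomial (Fin 3) ℂ)^2 + (X 2)^(n-2))) with hp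
    have hc0 : coeff 0 p = 0 := by
      rw [coeff_combo (n-2) A B Cc 0 rfl (Or.inl rfl)]
      rw [if_neg, if_neg]
      · ring
      · rw [Finsupp.single_le_iff]; simp; omega
      · rw [Finsupp.single_le_iff]; simp
    have hc1 : coeff (Finsupp.single 1 1) p = 0 := by
      rw [coeff_combo (n-2) A B Cc _ (by simp) (Or.inr (by simp))]
      rw [if_neg, if_neg]
      · ring
      · rw [Finsupp.single_le_iff]; simp [Finsupp.single_apply]; omega
      · rw [Finsupp.single_le_iff]; simp
    have hc2 : ∀ k : ℕ, 1 ≤ k → k ≤ n - 3 → coeff (Finsupp.single 2 k) p = 0 := by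
      intro k hk1 hk2
      rw [coeff_combo (n-2) A B Cc _ (by simp) (Or.inl (by simp))]
      rw [if_neg, if_neg]
      · ring
      · rw [Finsupp.single_le_iff, Finsupp.single_eq_same]; omega
      · rw [Finsupp.single_le_iff]; simp [Finsupp.single_apply]
    have hc3 : coeff (Finsupp.single 2 (n-2)) p = coeff (Finsupp.single 1 2) p := by
      rw [coeff_combo (n-2) A B Cc _ (by simp) (Or.inl (by simp)),
        coeff_combo (n-2) A B Cc _ (by simp) (Or.inr (by simp))]
      rw [if_neg, if_pos le_rfl, if_pos le_rfl, if_neg]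
      · simp
      · rw [Finsupp.single_le_iff]; simp [Finsupp.single_apply]; omega
      · rw [Finsupp.single_le_iff]; simp [Finsupp.single_apply]
    refine ⟨by rw [heval0]; exact hc0, by rw [heval1]; exact hc1, ?_, ?_⟩
    · intro k hk1 hk2
      rw [eval0_iter, hc2 k hk1 hk2, mul_zero]
    · rw [eval0_iter, eval0_iter, hc3]
      have : (Nat.factorial 2 : ℂ) = 2 := by norm_num [Nat.factorial]
      rw [this]; ring
  · -- backward
    rintro ⟨he0, he1, he2, he3⟩
    have hc0 : coeff 0 h = 0 := by rwa [heval0] at he0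
    have hc1 : coeff (Finsupp.single 1 1) h = 0 := by rwa [heval1] at he1
    have hfac : ((n-2).factorial : ℂ) ≠ 0 :=
      Nat.cast_ne_zero.mpr (Nat.factorial_ne_zero _)
    have hc2 : ∀ k : ℕ, 1 ≤ k → k ≤ n - 3 → coeff (Finsupp.single 2 k) h = 0 := by
      intro k hk1 hk2
      have := he2 k hk1 hk2
      rw [eval0_iter] at this
      exact (mul_eq_zero.mp this).resolve_left
        (Nat.cast_ne_zero.mpr (Nat.factorial_ne_zero _))
    have hc3 : coeff (Finsupp.single 2 (n-2)) h = coeff (Finsupp.single 1 2) h := by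
      rw [eval0_iter, eval0_iter] at he3
      have h2f : (Nat.factorial 2 : ℂ) = 2 := by norm_num [Nat.factorial]
      rw [h2f] at he3
      have key : ((n-2).factorial : ℂ) * (2 * (coeff (Finsupp.single 2 (n-2)) h
          - coeff (Finsupp.single 1 2) h)) = 0 := by linear_combination he3
      rcases mul_eq_zero.mp key with hbad | hgood
      · exact absurd hbad hfac
      · rcases mul_eq_zero.mp hgood with hbad | hgood'
        · norm_num at hbad
        · exact sub_eq_zero.mp hgood'
    -- ideal membership from coefficient conditions
    set I := Ideal.span ({X 0, X 1 * X 2, (X 1) ^ 2 + (X 2) ^ (n - 2)} :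
        Set (MvPolynomial (Fin 3) ℂ)) with hI
    have hu : (X 0 : MvPolynomial (Fin 3) ℂ) ∈ I := Ideal.subset_span (by simp)
    have hvt : (X 1 * X 2 : MvPolynomial (Fin 3) ℂ) ∈ I := Ideal.subset_span (by simp)
    have hgmem : ((X 1)^2 + (X 2)^(n-2) : MvPolynomial (Fin 3) ℂ) ∈ I :=
      Ideal.subset_span (by simp)
    have hv3 : ((X 1 : MvPolynomial (Fin 3) ℂ))^3 ∈ I := by
      have e : ((X 1 : MvPolynomial (Fin 3) ℂ))^3
          = X 1 * ((X 1)^2 + (X 2)^(n-2)) - (X 2)^(n-3) * (X 1 * X 2) := by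
        have h3 : n - 2 = (n - 3) + 1 := by omega
        rw [h3]; ring
      rw [e]; exact sub_mem (I.mul_mem_left _ hgmem) (I.mul_mem_left _ hvt)
    have ht : ((X 2 : MvPolynomial (Fin 3) ℂ))^(n-1) ∈ I := by
      have e : ((X 2 : MvPolynomial (Fin 3) ℂ))^(n-1)
          = X 2 * ((X 1)^2 + (X 2)^(n-2)) - X 1 * (X 1 * X 2) := by
        have h3 : n - 1 = (n - 2) + 1 := by omega
        rw [h3]; ring
      rw [e]; exact sub_mem (I.mul_mem_left _ hgmem) (I.mul_mem_left _ hvt)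
    set α := coeff (Finsupp.single 1 2) h with hα
    set g := h - C α * ((X 1 : MvPolynomial (Fin 3) ℂ)^2 + (X 2)^(n-2)) with hgdef
    have hsplit : h = g + C α * ((X 1)^2 + (X 2)^(n-2)) := by rw [hgdef]; ring
    rw [hsplit]
    refine add_mem ?_ (I.mul_mem_left _ hgmem)
    have hco : ∀ d : Fin 3 →₀ ℕ, coeff d g = coeff d h
        - α * ((if Finsupp.single 1 2 = d then 1 else 0)
          + (if Finsupp.single 2 (n-2) = d then 1 else 0)) := by
      intro d
      rw [hgdef, coeff_sub, coeff_C_mul, coeff_add, X_pow_eq_monomial, X_pow_eq_monomial,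
        coeff_monomial, coeff_monomial]
    have ne10 : ((Finsupp.single 1 2 : Fin 3 →₀ ℕ) = 0) = False := by
      rw [eq_iff_iff, iff_false, Finsupp.single_eq_zero]; omega
    have ne20 : ((Finsupp.single 2 (n-2) : Fin 3 →₀ ℕ) = 0) = False := by
      rw [eq_iff_iff, iff_false, Finsupp.single_eq_zero]; omega
    have ne11 : ∀ a b : ℕ, a ≠ b →
        ((Finsupp.single 1 a : Fin 3 →₀ ℕ) = Finsupp.single 1 b) = False := by
      intro a b hab
      rw [eq_iff_iff, iff_false]
      intro heq
      have := DFunLike.congr_fun heq 1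
      rw [Finsupp.single_eq_same, Finsupp.single_eq_same] at this
      exact hab this
    have ne21 : ∀ a b : ℕ, b ≠ 0 →
        ((Finsupp.single 2 a : Fin 3 →₀ ℕ) = Finsupp.single 1 b) = False := by
      intro a b hb
      rw [eq_iff_iff, iff_false]
      intro heq
      have := DFunLike.congr_fun heq 1
      rw [Finsupp.single_eq_of_ne (by decide), Finsupp.single_eq_same] at this
      exact hb this.symm
    have ne12 : ∀ a b : ℕ, a ≠ 0 →
        ((Finsupp.single 1 a : Fin 3 →₀ ℕ) = Finsupp.single 2 b) = False := by
      intro a b ha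
      rw [eq_iff_iff, iff_false]
      intro heq
      have := DFunLike.congr_fun heq 1
      rw [Finsupp.single_eq_same, Finsupp.single_eq_of_ne (by decide)] at this
      exact ha this
    have ne22 : ∀ a b : ℕ, a ≠ b →
        ((Finsupp.single 2 a : Fin 3 →₀ ℕ) = Finsupp.single 2 b) = False := by
      intro a b hab
      rw [eq_iff_iff, iff_false]
      intro heq
      have := DFunLike.congr_fun heq 2
      rw [Finsupp.single_eq_same, Finsupp.single_eq_same] at this
      exact hab this
    have hz1 : ∀ b : ℕ, b ≤ 2 → coeff (Finsupp.single 1 b) g = 0 := by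
      intro b hb
      interval_cases b
      · rw [hco, Finsupp.single_zero, hc0]
        simp only [ne10, ne20, if_false]; ring
      · rw [hco, hc1]
        simp only [ne11 2 1 (by omega), ne21 (n-2) 1 (by omega), if_false]; ring
      · rw [hco]
        simp only [ne21 (n-2) 2 (by omega), if_false, eq_self_iff_true, if_true]
        rw [← hα]; ring
    have hz2 : ∀ c : ℕ, c ≤ n - 2 → coeff (Finsupp.single 2 c) g = 0 := by
      intro c hc
      rcases Nat.eq_zero_or_pos c with rfl | hcpos
      · rw [hco, Finsupp.single_zero, hc0]
        simp only [ne10, ne20, if_false]; ring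
      rcases eq_or_lt_of_le hc with rfl | hlt
      · rw [hco, hc3]
        simp only [ne12 2 (n-2) (by omega), if_false, eq_self_iff_true, if_true]
        ring
      · rw [hco, hc2 c hcpos (by omega)]
        simp only [ne12 2 c (by omega), ne22 (n-2) c (by omega), if_false]; ring
    rw [g.as_sum]
    refine Ideal.sum_mem _ fun d hd => ?_
    have hne := MvPolynomial.mem_support_iff.mp hd
    by_cases h0 : d 0 = 0
    · by_cases h1 : d 1 = 0
      · have hbig : n - 1 ≤ d 2 := by
          by_contra hlt
          push_neg at hlt
          apply hne
          have hdeq : d = Finsupp.single 2 (d 2) := by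
            ext j; fin_cases j <;> simp +decide [Finsupp.single_apply, h0, h1]
          rw [hdeq]
          exact hz2 _ (by omega)
        refine mono_mem_of_le ?_ (Finsupp.single_le_iff.mpr hbig) _
        rw [← X_pow_eq_monomial]; exact ht
      · by_cases h2 : d 2 = 0
        · have hbig : 3 ≤ d 1 := by
            by_contra hlt
            push_neg at hlt
            apply hne
            have hdeq : d = Finsupp.single 1 (d 1) := by
              ext j; fin_cases j <;> simp +decide [Finsupp.single_apply, h0, h2]
            rw [hdeq]
            exact hz1 _ (by omega)
          refine mono_mem_of_le ?_ (Finsupp.single_le_iff.mpr hbig) _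
          rw [← X_pow_eq_monomial]; exact hv3
        · refine mono_mem_of_le (e := Finsupp.single 1 1 + Finsupp.single 2 1) ?_ ?_ _
          · have e12 : (X 1 * X 2 : MvPolynomial (Fin 3) ℂ)
                = monomial (Finsupp.single 1 1 + Finsupp.single 2 1) 1 := by
              rw [← pow_one (X (1:Fin 3)), ← pow_one (X (2:Fin 3)), X_pow_eq_monomial,
                X_pow_eq_monomial, monomial_mul, mul_one]
            rw [← e12]; exact hvt
          · rw [Finsupp.le_def]
            intro j
            fin_cases j <;> simp +decide [Finsupp.single_apply] <;> omega
    · refine mono_mem_of_le (e := Finsupp.single 0 1) ?_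
        (Finsupp.single_le_iff.mpr (by omega)) _
      have e0 : (X 0 : MvPolynomial (Fin 3) ℂ) = monomial (Finsupp.single 0 1) 1 := by
        rw [← pow_one (X (0:Fin 3)), X_pow_eq_monomial]
      rw [← e0]; exact hu
end

section
/- For a polynomial h ∈ ℂ[u,v,t], the following are equivalent: (i) h lies in the ideal generated by u, 3v² + t³, and v·t² (the Jacobian ideal of the E₇ normal form u² + v³ + v·t³); (ii) all seven of the following vanish at the origin: h, ∂_v h, ∂_t h, ∂_v ∂_t h, ∂_t² h, (∂_t³ − ∂_v²) h, and (∂_t⁴ − 4·∂_v² ∂_t) h. -/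
open MvPolynomial

abbrev R3 := MvPolynomial (Fin 3) ℂ

def Ann (h : R3) : Prop :=
  eval (0 : Fin 3 → ℂ) h = 0 ∧
  eval (0 : Fin 3 → ℂ) (pderiv 1 h) = 0 ∧
  eval (0 : Fin 3 → ℂ) (pderiv 2 h) = 0 ∧
  eval (0 : Fin 3 → ℂ) (pderiv 1 (pderiv 2 h)) = 0 ∧
  eval (0 : Fin 3 → ℂ) (pderiv 2 (pderiv 2 h)) = 0 ∧
  eval (0 : Fin 3 → ℂ) (pderiv 2 (pderiv 2 (pderiv 2 h))) -
    eval (0 : Fin 3 → ℂ) (pderiv 1 (pderiv 1 h)) = 0 ∧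
  eval (0 : Fin 3 → ℂ) (pderiv 2 (pderiv 2 (pderiv 2 (pderiv 2 h)))) -
    4 * eval (0 : Fin 3 → ℂ) (pderiv 1 (pderiv 1 (pderiv 2 h))) = 0

lemma ann_mul {p h : R3} (H : Ann h) : Ann (p * h) := by
  obtain ⟨h0, h1, h2, h3, h4, h5, h6⟩ := H
  set e : R3 → ℂ := ⇑(eval (0 : Fin 3 → ℂ)) with he
  refine ⟨?_, ?_, ?_, ?_, ?_, ?_, ?_⟩ <;> simp only [pderiv_mul, map_add, map_mul, ← he]
  · linear_combination (e p) * h0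
  · linear_combination (e (pderiv 1 p)) * h0 + (e p) * h1
  · linear_combination (e (pderiv 2 p)) * h0 + (e p) * h2
  · linear_combination (e (pderiv 1 (pderiv 2 p))) * h0 + (e (pderiv 2 p)) * h1 +
      (e (pderiv 1 p)) * h2 + (e p) * h3
  · linear_combination (e (pderiv 2 (pderiv 2 p))) * h0 + 2 * (e (pderiv 2 p)) * h2 + (e p) * h4
  · linear_combination (e (pderiv 2 (pderiv 2 (pderiv 2 p))) - e (pderiv 1 (pderiv 1 p))) * h0 -
      2 * (e (pderiv 1 p)) * h1 + 3 * (e (pderiv 2 (pderiv 2 p))) * h2 +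
      3 * (e (pderiv 2 p)) * h4 + (e p) * h5
  · linear_combination
      (e (pderiv 2 (pderiv 2 (pderiv 2 (pderiv 2 p)))) -
        4 * e (pderiv 1 (pderiv 1 (pderiv 2 p)))) * h0 -
      8 * (e (pderiv 1 (pderiv 2 p))) * h1 +
      (4 * e (pderiv 2 (pderiv 2 (pderiv 2 p))) - 4 * e (pderiv 1 (pderiv 1 p))) * h2 -
      8 * (e (pderiv 1 p)) * h3 + 6 * (e (pderiv 2 (pderiv 2 p))) * h4 +
      4 * (e (pderiv 2 p)) * h5 + (e p) * h6

lemma ann_gen0 : Ann (X 0 : R3) := by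
  refine ⟨?_, ?_, ?_, ?_, ?_, ?_, ?_⟩ <;>
    simp [pderiv_X, Pi.single_apply]

lemma ann_gen1 : Ann ((3 : ℂ) • (X 1) ^ 2 + (X 2) ^ 3 : R3) := by
  have e : ((3 : ℂ) • (X 1) ^ 2 + (X 2) ^ 3 : R3)
      = C 3 * (X 1 * X 1) + X 2 * (X 2 * X 2) := by
    rw [smul_eq_C_mul]; ring
  rw [e]
  refine ⟨?_, ?_, ?_, ?_, ?_, ?_, ?_⟩ <;>
    simp [pderiv_mul, pderiv_X, pderiv_C, Pi.single_apply] <;> ring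

lemma ann_gen2 : Ann (X 1 * (X 2) ^ 2 : R3) := by
  have e : (X 1 * (X 2) ^ 2 : R3) = X 1 * (X 2 * X 2) := by ring
  rw [e]
  refine ⟨?_, ?_, ?_, ?_, ?_, ?_, ?_⟩ <;>
    simp [pderiv_mul, pderiv_X, Pi.single_apply] <;> ring

lemma ann_zero : Ann (0 : R3) := by
  refine ⟨?_, ?_, ?_, ?_, ?_, ?_, ?_⟩ <;> simp

lemma ann_add {p q : R3} (hp : Ann p) (hq : Ann q) : Ann (p + q) := by
  obtain ⟨p0, p1, p2, p3, p4, p5, p6⟩ := hp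
  obtain ⟨q0, q1, q2, q3, q4, q5, q6⟩ := hq
  refine ⟨?_, ?_, ?_, ?_, ?_, ?_, ?_⟩ <;> simp only [map_add]
  · linear_combination p0 + q0
  · linear_combination p1 + q1
  · linear_combination p2 + q2
  · linear_combination p3 + q3
  · linear_combination p4 + q4
  · linear_combination p5 + q5
  · linear_combination p6 + q6

def Sgen : Set R3 := {X 0, (3 : ℂ) • (X 1) ^ 2 + (X 2) ^ 3, X 1 * (X 2) ^ 2}

lemma ann_of_mem {h : R3} (hm : h ∈ Ideal.span Sgen) : Ann h := by
  refine Submodule.span_induction ?_ ann_zero (fun x y _ _ hx hy => ann_add hx hy)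
    (fun r x _ hx => by simpa [smul_eq_mul] using ann_mul (p := r) hx) hm
  rintro x (rfl | rfl | rfl)
  · exact ann_gen0
  · exact ann_gen1
  · exact ann_gen2

noncomputable def Bspan : Submodule ℂ R3 :=
  Submodule.span ℂ {1, X 2, X 2 ^ 2, X 2 ^ 3, X 2 ^ 4, X 1, X 1 * X 2}

noncomputable def Mbig : Submodule ℂ R3 :=
  Submodule.restrictScalars ℂ (Ideal.span Sgen) ⊔ Bspan

lemma gen0_mem : (X 0 : R3) ∈ Ideal.span Sgen :=
  Ideal.subset_span (by left; rfl)

lemma gen1_mem : ((3 : ℂ) • (X 1) ^ 2 + (X 2) ^ 3 : R3) ∈ Ideal.span Sgen :=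
  Ideal.subset_span (by right; left; rfl)

lemma gen2_mem : (X 1 * (X 2) ^ 2 : R3) ∈ Ideal.span Sgen :=
  Ideal.subset_span (by right; right; rfl)

lemma t5_mem : ((X 2 : R3) ^ 5) ∈ Ideal.span Sgen := by
  have e : ((X 2 : R3) ^ 5) =
      X 2 ^ 2 * ((3 : ℂ) • (X 1) ^ 2 + (X 2) ^ 3) - (C 3 * X 1) * (X 1 * (X 2) ^ 2) := by
    rw [smul_eq_C_mul]; ring
  rw [e]
  exact sub_mem (Ideal.mul_mem_left _ _ gen1_mem) (Ideal.mul_mem_left _ _ gen2_mem)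

lemma ideal_le_M : Submodule.restrictScalars ℂ (Ideal.span Sgen) ≤ Mbig := le_sup_left

lemma basis_le_M : Bspan ≤ Mbig := le_sup_right

lemma tpow_mem : ∀ c : ℕ, ((X 2 : R3) ^ c) ∈ Mbig := by
  intro c
  match c with
  | 0 | 1 | 2 | 3 | 4 =>
    refine basis_le_M (Submodule.subset_span ?_)
    · simp
  | (c + 5) =>
    refine ideal_le_M ?_
    have e : ((X 2 : R3) ^ (c + 5)) = X 2 ^ c * X 2 ^ 5 := by ring
    rw [Submodule.restrictScalars_mem, e]
    exact Ideal.mul_mem_left _ _ t5_mem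

lemma vt_mem : ∀ c : ℕ, ((X 1 : R3) * X 2 ^ c) ∈ Mbig := by
  intro c
  match c with
  | 0 => refine basis_le_M (Submodule.subset_span ?_); simp
  | 1 =>
    refine basis_le_M (Submodule.subset_span ?_)
    rw [pow_one]; simp
  | (c + 2) =>
    refine ideal_le_M ?_
    have e : ((X 1 : R3) * X 2 ^ (c + 2)) = X 2 ^ c * (X 1 * X 2 ^ 2) := by ring
    rw [Submodule.restrictScalars_mem, e]
    exact Ideal.mul_mem_left _ _ gen2_mem

lemma vb_mem : ∀ b c : ℕ, ((X 1 : R3) ^ b * X 2 ^ c) ∈ Mbig := by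
  intro b
  induction b using Nat.strong_induction_on with
  | _ b ih =>
    intro c
    match b with
    | 0 => simpa using tpow_mem c
    | 1 => simpa using vt_mem c
    | (b + 2) =>
      have key : (3 : ℂ) • ((X 1 : R3) ^ (b + 2) * X 2 ^ c) =
          X 1 ^ b * X 2 ^ c * ((3 : ℂ) • (X 1) ^ 2 + (X 2) ^ 3) - X 1 ^ b * X 2 ^ (c + 3) := by
        rw [smul_eq_C_mul, smul_eq_C_mul]; ring
      have hmem : (3 : ℂ) • ((X 1 : R3) ^ (b + 2) * X 2 ^ c) ∈ Mbig := by
        rw [key]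
        refine sub_mem (ideal_le_M ?_) (ih b (by omega) (c + 3))
        rw [Submodule.restrictScalars_mem]
        exact Ideal.mul_mem_left _ _ gen1_mem
      exact (Submodule.smul_mem_iff _ (by norm_num : (3 : ℂ) ≠ 0)).mp hmem

lemma mono_mem : ∀ a b c : ℕ, ((X 0 : R3) ^ a * (X 1 ^ b * X 2 ^ c)) ∈ Mbig := by
  intro a b c
  match a with
  | 0 => simpa using vb_mem b c
  | (a + 1) =>
    refine ideal_le_M ?_
    have e : ((X 0 : R3) ^ (a + 1) * (X 1 ^ b * X 2 ^ c)) =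
        (X 0 ^ a * (X 1 ^ b * X 2 ^ c)) * X 0 := by ring

    rw [Submodule.restrictScalars_mem, e]
    exact Ideal.mul_mem_left _ _ gen0_mem

lemma all_mem (h : R3) : h ∈ Mbig := by
  rw [MvPolynomial.as_sum h]
  refine Submodule.sum_mem _ fun d _ => ?_
  have e : (monomial d) (coeff d h) = (coeff d h) • (X 0 ^ d 0 * (X 1 ^ d 1 * X 2 ^ d 2) : R3) := by
    rw [smul_eq_C_mul, monomial_eq]
    congr 1
    rw [Finsupp.prod_fintype _ _ (fun i => pow_zero _), Fin.prod_univ_three]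
    ring
  rw [e]
  exact Submodule.smul_mem _ _ (mono_mem _ _ _)

lemma span_ann_zero {r : R3} (hr : r ∈ Bspan) (ha : Ann r) : r = 0 := by
  rw [Bspan, Submodule.mem_span_insert] at hr
  obtain ⟨c0, z, hz, rfl⟩ := hr
  rw [Submodule.mem_span_insert] at hz
  obtain ⟨c1, z, hz, rfl⟩ := hz
  rw [Submodule.mem_span_insert] at hz
  obtain ⟨c2, z, hz, rfl⟩ := hz
  rw [Submodule.mem_span_insert] at hz
  obtain ⟨c3, z, hz, rfl⟩ := hz
  rw [Submodule.mem_span_insert] at hz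
  obtain ⟨c4, z, hz, rfl⟩ := hz
  rw [Submodule.mem_span_insert] at hz
  obtain ⟨c5, z, hz, rfl⟩ := hz
  rw [Submodule.mem_span_singleton] at hz
  obtain ⟨c6, rfl⟩ := hz
  obtain ⟨a0, a1, a2, a3, a4, a5, a6⟩ := ha
  simp [smul_eq_C_mul, pderiv_mul, pderiv_pow, pderiv_X, pderiv_C,
    Pi.single_apply, Derivation.map_natCast, map_natCast, -Nat.cast_ofNat] at a0 a1 a2 a3 a4 a5 a6
  simp [a0, a1, a2, a3, a4, a5, a6]

/-- The `E₇` case of the characterization of the Jacobian ideal by differential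
operators: `h ∈ ℂ[u,v,t]` lies in the ideal `(u, 3v² + t³, v·t²)` (the Jacobian
ideal of `u² + v³ + v·t³`) iff `h`, `∂ᵥ h`, `∂ₜ h`, `∂ᵥ∂ₜ h`, `∂ₜ² h`,
`(∂ₜ³ − ∂ᵥ²) h`, `(∂ₜ⁴ − 4·∂ᵥ²∂ₜ) h` all vanish at the origin. -/
theorem e7_jacobian_ideal_iff_annihilated (h : MvPolynomial (Fin 3) ℂ) :
    h ∈ Ideal.span
        ({X 0, (3 : ℂ) • (X 1) ^ 2 + (X 2) ^ 3, X 1 * (X 2) ^ 2} :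
          Set (MvPolynomial (Fin 3) ℂ)) ↔
      (eval (0 : Fin 3 → ℂ) h = 0 ∧
        eval (0 : Fin 3 → ℂ) (pderiv (1 : Fin 3) h) = 0 ∧
        eval (0 : Fin 3 → ℂ) (pderiv (2 : Fin 3) h) = 0 ∧
        eval (0 : Fin 3 → ℂ) (pderiv (1 : Fin 3) (pderiv (2 : Fin 3) h)) = 0 ∧
        eval (0 : Fin 3 → ℂ) ((⇑(pderiv (2 : Fin 3)))^[2] h) = 0 ∧
        eval (0 : Fin 3 → ℂ) ((⇑(pderiv (2 : Fin 3)))^[3] h) -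
          eval (0 : Fin 3 → ℂ) ((⇑(pderiv (1 : Fin 3)))^[2] h) = 0 ∧
        eval (0 : Fin 3 → ℂ) ((⇑(pderiv (2 : Fin 3)))^[4] h) -
          4 * eval (0 : Fin 3 → ℂ)
            ((⇑(pderiv (1 : Fin 3)))^[2] (pderiv (2 : Fin 3) h)) = 0) := by
  have hiter : ∀ (i : Fin 3) (n : ℕ) (p : R3), (⇑(pderiv i))^[n + 1] p = pderiv i ((⇑(pderiv i))^[n] p) :=
    fun i n p => Function.iterate_succ_apply' _ n p
  have hAnn : (Ann h) ↔
      (eval (0 : Fin 3 → ℂ) h = 0 ∧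
        eval (0 : Fin 3 → ℂ) (pderiv (1 : Fin 3) h) = 0 ∧
        eval (0 : Fin 3 → ℂ) (pderiv (2 : Fin 3) h) = 0 ∧
        eval (0 : Fin 3 → ℂ) (pderiv (1 : Fin 3) (pderiv (2 : Fin 3) h)) = 0 ∧
        eval (0 : Fin 3 → ℂ) ((⇑(pderiv (2 : Fin 3)))^[2] h) = 0 ∧
        eval (0 : Fin 3 → ℂ) ((⇑(pderiv (2 : Fin 3)))^[3] h) -
          eval (0 : Fin 3 → ℂ) ((⇑(pderiv (1 : Fin 3)))^[2] h) = 0 ∧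
        eval (0 : Fin 3 → ℂ) ((⇑(pderiv (2 : Fin 3)))^[4] h) -
          4 * eval (0 : Fin 3 → ℂ)
            ((⇑(pderiv (1 : Fin 3)))^[2] (pderiv (2 : Fin 3) h)) = 0) := by
    simp only [show (4:ℕ) = 3 + 1 from rfl, show (3:ℕ) = 2 + 1 from rfl,
      show (2:ℕ) = 1 + 1 from rfl, hiter, Function.iterate_one]
    rfl
  rw [show ({X 0, (3 : ℂ) • (X 1) ^ 2 + (X 2) ^ 3, X 1 * (X 2) ^ 2} :
      Set (MvPolynomial (Fin 3) ℂ)) = Sgen from rfl, ← hAnn]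
  constructor
  · exact ann_of_mem
  · intro ha
    have hM := all_mem h
    rw [Mbig, Submodule.mem_sup] at hM
    obtain ⟨y, hy, z, hz, rfl⟩ := hM
    rw [Submodule.restrictScalars_mem] at hy
    have hAy : Ann y := ann_of_mem hy
    have hAz : Ann z := by
      obtain ⟨y0, y1, y2, y3, y4, y5, y6⟩ := hAy
      obtain ⟨a0, a1, a2, a3, a4, a5, a6⟩ := ha
      simp only [map_add] at a0 a1 a2 a3 a4 a5 a6
      refine ⟨?_, ?_, ?_, ?_, ?_, ?_, ?_⟩
      · linear_combination a0 - y0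
      · linear_combination a1 - y1
      · linear_combination a2 - y2
      · linear_combination a3 - y3
      · linear_combination a4 - y4
      · linear_combination a5 - y5
      · linear_combination a6 - y6
    rw [span_ann_zero hz hAz, add_zero]
    exact hy
end

section
/- Let n ≥ 4 be an integer and let I ⊆ ℂ[u,v,t] be the ideal generated by u, v·t, and v² + t^{n−2}. Then every h ∈ I satisfies h(0,0,0) = 0, (∂_v h)(0,0,0) = 0, and (∂_t^k h)(0,0,0) = 0 for every k with 1 ≤ k ≤ n−3. (The differential operators associated to a D_n singularity annihilate every element of its Jacobian ideal.) -/
open MvPolynomial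

private lemma eval0_of_mem {S : Set (MvPolynomial (Fin 3) ℂ)}
    (hS : ∀ g ∈ S, eval (0 : Fin 3 → ℂ) g = 0)
    {h : MvPolynomial (Fin 3) ℂ} (hh : h ∈ Ideal.span S) :
    eval (0 : Fin 3 → ℂ) h = 0 := by
  induction hh using Submodule.span_induction with
  | mem x hx => exact hS x hx
  | zero => simp
  | add x y _ _ hx hy => rw [map_add, hx, hy, add_zero]
  | smul r x _ hx => rw [smul_eq_mul, map_mul, hx, mul_zero]

private lemma pderiv_mem {i : Fin 3} {S : Set (MvPolynomial (Fin 3) ℂ)}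
    {J : Ideal (MvPolynomial (Fin 3) ℂ)}
    (h1 : ∀ g ∈ S, g ∈ J) (h2 : ∀ g ∈ S, pderiv i g ∈ J)
    {h : MvPolynomial (Fin 3) ℂ} (hh : h ∈ Ideal.span S) :
    h ∈ J ∧ pderiv i h ∈ J := by
  induction hh using Submodule.span_induction with
  | mem x hx => exact ⟨h1 x hx, h2 x hx⟩
  | zero => simp
  | add x y _ _ hx hy =>
      exact ⟨J.add_mem hx.1 hy.1, by rw [map_add]; exact J.add_mem hx.2 hy.2⟩
  | smul r x _ hx =>
      refine ⟨J.smul_mem r hx.1, ?_⟩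
      rw [smul_eq_mul, pderiv_mul]
      exact J.add_mem (J.mul_mem_left _ hx.1) (J.mul_mem_left _ hx.2)

/-- The differential operators associated to a `D_n` singularity (`n ≥ 4`)
annihilate every element of its Jacobian ideal `(u, v·t, v² + t^{n−2})`:
every `h` in this ideal satisfies `h(0,0,0) = 0`, `(∂ᵥ h)(0,0,0) = 0`, and
`(∂ₜᵏ h)(0,0,0) = 0` for all `1 ≤ k ≤ n−3`. -/
theorem dn_operators_annihilate_jacobian (n : ℕ) (hn : 4 ≤ n)
    (h : MvPolynomial (Fin 3) ℂ)
    (hh : h ∈ Ideal.span ({X 0, X 1 * X 2, (X 1) ^ 2 + (X 2) ^ (n - 2)} :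
      Set (MvPolynomial (Fin 3) ℂ))) :
    eval (0 : Fin 3 → ℂ) h = 0 ∧
      eval (0 : Fin 3 → ℂ) (pderiv (1 : Fin 3) h) = 0 ∧
      ∀ k : ℕ, 1 ≤ k → k ≤ n - 3 →
        eval (0 : Fin 3 → ℂ) ((⇑(pderiv (2 : Fin 3)))^[k] h) = 0 := by
  have hn2 : n - 2 ≠ 0 := by omega
  refine ⟨?_, ?_, ?_⟩
  · refine eval0_of_mem ?_ hh
    rintro g (rfl | rfl | rfl) <;> simp [zero_pow hn2]
  · -- ∂ᵥ h lands in the ideal (X0, X1, X2)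
    have key : pderiv (1 : Fin 3) h ∈
        Ideal.span ({X 0, X 1, X 2} : Set (MvPolynomial (Fin 3) ℂ)) := by
      refine (pderiv_mem ?_ ?_ hh).2
      · have m0 : (X 0 : MvPolynomial (Fin 3) ℂ) ∈ _ :=
          Ideal.subset_span (by simp : (X 0 : MvPolynomial (Fin 3) ℂ) ∈ ({X 0, X 1, X 2} : Set _))
        have m1 : (X 1 : MvPolynomial (Fin 3) ℂ) ∈ Ideal.span ({X 0, X 1, X 2} : Set _) :=
          Ideal.subset_span (by simp)
        have m2 : (X 2 : MvPolynomial (Fin 3) ℂ) ∈ Ideal.span ({X 0, X 1, X 2} : Set _) :=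
          Ideal.subset_span (by simp)
        rintro g (rfl | rfl | rfl)
        · exact m0
        · exact Ideal.mul_mem_left _ _ m2
        · exact Ideal.add_mem _ (by rw [sq]; exact Ideal.mul_mem_left _ _ m1)
            (Ideal.pow_mem_of_mem _ m2 _ (by omega))
      · have m1 : (X 1 : MvPolynomial (Fin 3) ℂ) ∈ Ideal.span ({X 0, X 1, X 2} : Set _) :=
          Ideal.subset_span (by simp)
        have m2 : (X 2 : MvPolynomial (Fin 3) ℂ) ∈ Ideal.span ({X 0, X 1, X 2} : Set _) :=
          Ideal.subset_span (by simp)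
        rintro g (rfl | rfl | rfl)
        · simp
        · rw [pderiv_mul, pderiv_X_self, pderiv_X_of_ne (by decide), mul_zero, add_zero, one_mul]
          exact m2
        · rw [map_add, pderiv_pow, pderiv_pow, pderiv_X_self, pderiv_X_of_ne (by decide)]
          simp only [mul_zero, add_zero, mul_one]
          exact Ideal.mul_mem_left _ _ (by simpa using m1)
    refine eval0_of_mem ?_ key
    rintro g (rfl | rfl | rfl) <;> simp
  · -- iterated t-derivatives
    have claim : ∀ k : ℕ, k ≤ n - 3 → (⇑(pderiv (2 : Fin 3)))^[k] h ∈
        Ideal.span ({X 0, X 1, (X 2) ^ (n - 2 - k)} : Set (MvPolynomial (Fin 3) ℂ)) := by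
      intro k
      induction k with
      | zero =>
        intro _
        rw [Function.iterate_zero_apply]
        refine Ideal.span_le.mpr ?_ hh
        have m1 : (X 1 : MvPolynomial (Fin 3) ℂ) ∈
            Ideal.span ({X 0, X 1, (X 2) ^ (n - 2 - 0)} : Set _) := Ideal.subset_span (by simp)
        rintro g (rfl | rfl | rfl)
        · exact Ideal.subset_span (by simp)
        · exact Ideal.mul_mem_right _ _ m1
        · refine Ideal.add_mem _ (by rw [sq]; exact Ideal.mul_mem_left _ _ m1) ?_
          have : n - 2 - 0 = n - 2 := by omega
          exact Ideal.subset_span (by rw [this]; simp)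
      | succ k ih =>
        intro hk
        have hk' : k ≤ n - 3 := by omega
        rw [Function.iterate_succ_apply']
        have hm : n - 2 - k = (n - 2 - (k + 1)) + 1 := by omega
        refine (pderiv_mem ?_ ?_ (ih hk')).2
        · rintro g (rfl | rfl | rfl)
          · exact Ideal.subset_span (by simp)
          · exact Ideal.subset_span (by simp)
          · rw [hm, pow_succ]
            exact Ideal.mul_mem_right _ _ (Ideal.subset_span (by simp))
        · rintro g (rfl | rfl | rfl)
          · simp
          · rw [pderiv_X_of_ne (by decide)]; simp
          · rw [pderiv_pow, pderiv_X_self, mul_one, hm]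
            simp only [Nat.add_sub_cancel]
            exact Ideal.mul_mem_left _ _ (Ideal.subset_span (by simp))
    intro k hk1 hk2
    refine eval0_of_mem ?_ (claim k hk2)
    have : n - 2 - k ≠ 0 := by omega
    rintro g (rfl | rfl | rfl) <;> simp [zero_pow this]
end

section
/- Let n ≥ 4 be an integer. The images of the polynomials 1, v, t, t², …, t^{n−2} form a basis of the quotient ring ℂ[u,v,t]/(u, v·t, v² + t^{n−2}) as a vector space over ℂ; in particular, this quotient has ℂ-dimension n (the Milnor number of a D_n singularity). -/
set_option maxHeartbeats 1000000


open MvPolynomial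

noncomputable def gfun (n a b c : ℕ) : Fin n → ℂ := fun i =>
  if a = 0 then
    if b = 0 then
      (if c = 0 ∧ (i : ℕ) = 0 then 1
       else if 1 ≤ c ∧ c ≤ n - 2 ∧ (i : ℕ) = c + 1 then 1 else 0)
    else if b = 1 then (if c = 0 ∧ (i : ℕ) = 1 then 1 else 0)
    else if b = 2 then (if c = 0 ∧ (i : ℕ) = n - 1 then -1 else 0)
    else 0
  else 0

noncomputable def ffun (n : ℕ) (d : Fin 3 →₀ ℕ) : Fin n → ℂ := gfun n (d 0) (d 1) (d 2)

noncomputable def Lmap (n : ℕ) : MvPolynomial (Fin 3) ℂ →ₗ[ℂ] (Fin n → ℂ) :=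
  (MvPolynomial.basisMonomials (Fin 3) ℂ).constr ℂ (ffun n)

lemma Lmap_monomial (n : ℕ) (d : Fin 3 →₀ ℕ) :
    Lmap n (monomial d 1) = ffun n d := by
  have h : (MvPolynomial.basisMonomials (Fin 3) ℂ) d = monomial d 1 := by
    rw [MvPolynomial.coe_basisMonomials]
  rw [← h]
  exact (MvPolynomial.basisMonomials (Fin 3) ℂ).constr_basis ℂ _ d

lemma Xmono (i : Fin 3) : (X i : MvPolynomial (Fin 3) ℂ) = monomial (Finsupp.single i 1) 1 := by
  rw [← MvPolynomial.X_pow_eq_monomial, pow_one]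

lemma Xmonopow (i : Fin 3) (e : ℕ) :
    (X i : MvPolynomial (Fin 3) ℂ) ^ e = monomial (Finsupp.single i e) 1 :=
  MvPolynomial.X_pow_eq_monomial

lemma Lmap_mul_gen (n : ℕ) (g : MvPolynomial (Fin 3) ℂ)
    (h : ∀ d : Fin 3 →₀ ℕ, Lmap n (monomial d 1 * g) = 0) (q : MvPolynomial (Fin 3) ℂ) :
    Lmap n (q * g) = 0 := by
  have h2 : (Lmap n).comp (LinearMap.mulRight ℂ g) = 0 :=
    (MvPolynomial.basisMonomials (Fin 3) ℂ).ext fun d => by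
      simpa [MvPolynomial.coe_basisMonomials, LinearMap.mulRight_apply] using h d
  simpa [LinearMap.mulRight_apply] using LinearMap.congr_fun h2 q

lemma sapp (i j : Fin 3) (e : ℕ) (d : Fin 3 →₀ ℕ) :
    (d + Finsupp.single i e) j = d j + if i = j then e else 0 := by
  simp [Finsupp.single_apply]

lemma Lmap_mul_X0 (n : ℕ) (q : MvPolynomial (Fin 3) ℂ) : Lmap n (q * X 0) = 0 := by
  apply Lmap_mul_gen
  intro d
  rw [Xmono, MvPolynomial.monomial_mul, one_mul, Lmap_monomial]
  funext i
  simp only [ffun, gfun, sapp, Fin.reduceEq, reduceIte, add_zero, zero_add, Pi.zero_apply]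
  rw [if_neg (by omega : ¬ d 0 + 1 = 0)]

lemma Lmap_mul_vt (n : ℕ) (q : MvPolynomial (Fin 3) ℂ) : Lmap n (q * (X 1 * X 2)) = 0 := by
  apply Lmap_mul_gen
  intro d
  rw [Xmono 1, Xmono 2, MvPolynomial.monomial_mul, MvPolynomial.monomial_mul, one_mul, one_mul,
    Lmap_monomial]
  rw [← add_assoc]
  funext i
  simp only [ffun, gfun, sapp, Fin.reduceEq, reduceIte, add_zero, zero_add, Pi.zero_apply]
  split_ifs <;> first | contradiction | omega | simp_all | norm_num

lemma Lmap_mul_g3 (n : ℕ) (hn : 4 ≤ n) (q : MvPolynomial (Fin 3) ℂ) :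
    Lmap n (q * (X 1 ^ 2 + X 2 ^ (n - 2))) = 0 := by
  apply Lmap_mul_gen
  intro d
  rw [mul_add, Xmonopow 1 2, Xmonopow 2 (n-2), MvPolynomial.monomial_mul,
    MvPolynomial.monomial_mul, one_mul, map_add, Lmap_monomial, Lmap_monomial]
  funext i
  simp only [ffun, gfun, sapp, Fin.reduceEq, reduceIte, add_zero, zero_add, Pi.add_apply,
    Pi.zero_apply]
  split_ifs <;> first | contradiction | omega | simp_all | norm_num

lemma Lmap_ideal (n : ℕ) (hn : 4 ≤ n) {p : MvPolynomial (Fin 3) ℂ}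
    (hp : p ∈ Ideal.span ({X 0, X 1 * X 2, (X 1) ^ 2 + (X 2) ^ (n - 2)} :
      Set (MvPolynomial (Fin 3) ℂ))) :
    Lmap n p = 0 := by
  rw [Ideal.mem_span_insert] at hp
  obtain ⟨q1, z1, hz1, rfl⟩ := hp
  rw [Ideal.mem_span_insert] at hz1
  obtain ⟨q2, z2, hz2, rfl⟩ := hz1
  rw [Ideal.mem_span_singleton] at hz2
  obtain ⟨q3, rfl⟩ := hz2
  rw [map_add, map_add, Lmap_mul_X0, Lmap_mul_vt, mul_comm, Lmap_mul_g3 n hn]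
  simp

lemma mono3 (d : Fin 3 →₀ ℕ) :
    (monomial d 1 : MvPolynomial (Fin 3) ℂ) = X 0 ^ d 0 * X 1 ^ d 1 * X 2 ^ d 2 := by
  have hd : d = Finsupp.single 0 (d 0) + Finsupp.single 1 (d 1) + Finsupp.single 2 (d 2) := by
    ext i; fin_cases i <;> simp [Finsupp.single_apply]
  rw [hd]
  rw [← one_mul (1 : ℂ), ← MvPolynomial.monomial_mul, ← one_mul (1 : ℂ), ← MvPolynomial.monomial_mul]
  simp [MvPolynomial.X_pow_eq_monomial]

/-- For `n ≥ 4`, the images of `1, v, t, t², …, t^{n−2}` form a ℂ-basis of the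
quotient `ℂ[u,v,t]/(u, v·t, v² + t^{n−2})`; in particular this quotient has
ℂ-dimension `n` (the Milnor number of a `D_n` singularity). -/
theorem dn_milnor_basis (n : ℕ) (hn : 4 ≤ n) :
    (∃ B : Module.Basis (Fin n) ℂ
        (MvPolynomial (Fin 3) ℂ ⧸
          Ideal.span ({X 0, X 1 * X 2, (X 1) ^ 2 + (X 2) ^ (n - 2)} :
            Set (MvPolynomial (Fin 3) ℂ))),
      ∀ k : Fin n,
        B k = Ideal.Quotient.mk _
          (if (k : ℕ) = 0 then 1
           else if (k : ℕ) = 1 then (X (1 : Fin 3) : MvPolynomial (Fin 3) ℂ)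
           else (X (2 : Fin 3) : MvPolynomial (Fin 3) ℂ) ^ ((k : ℕ) - 1))) ∧
    Module.finrank ℂ
      (MvPolynomial (Fin 3) ℂ ⧸
        Ideal.span ({X 0, X 1 * X 2, (X 1) ^ 2 + (X 2) ^ (n - 2)} :
          Set (MvPolynomial (Fin 3) ℂ))) = n := by
  set I : Ideal (MvPolynomial (Fin 3) ℂ) :=
    Ideal.span ({X 0, X 1 * X 2, (X 1) ^ 2 + (X 2) ^ (n - 2)} :
      Set (MvPolynomial (Fin 3) ℂ)) with hI
  -- ideal membership facts
  have hX0mem : (X 0 : MvPolynomial (Fin 3) ℂ) ∈ I := Ideal.subset_span (by simp)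
  have hvtmem : (X 1 * X 2 : MvPolynomial (Fin 3) ℂ) ∈ I := Ideal.subset_span (by simp)
  have hg3mem : ((X 1) ^ 2 + (X 2) ^ (n - 2) : MvPolynomial (Fin 3) ℂ) ∈ I :=
    Ideal.subset_span (by simp)
  have htn1 : ((X 2 : MvPolynomial (Fin 3) ℂ)) ^ (n - 1) ∈ I := by
    have heq : ((X 2 : MvPolynomial (Fin 3) ℂ)) ^ (n - 1)
        = X 2 * ((X 1) ^ 2 + (X 2) ^ (n - 2)) - X 1 * (X 1 * X 2) := by
      rw [show n - 1 = (n - 2) + 1 by omega]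
      ring
    rw [heq]
    exact sub_mem (Ideal.mul_mem_left _ _ hg3mem) (Ideal.mul_mem_left _ _ hvtmem)
  have hv3 : ((X 1 : MvPolynomial (Fin 3) ℂ)) ^ 3 ∈ I := by
    have heq : ((X 1 : MvPolynomial (Fin 3) ℂ)) ^ 3
        = X 1 * ((X 1) ^ 2 + (X 2) ^ (n - 2)) - X 2 ^ (n - 3) * (X 1 * X 2) := by
      rw [show n - 2 = (n - 3) + 1 by omega]
      ring
    rw [heq]
    exact sub_mem (Ideal.mul_mem_left _ _ hg3mem) (Ideal.mul_mem_left _ _ hvtmem)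
  -- the candidate basis family
  set poly : Fin n → MvPolynomial (Fin 3) ℂ := fun k =>
    if (k : ℕ) = 0 then 1
    else if (k : ℕ) = 1 then (X (1 : Fin 3) : MvPolynomial (Fin 3) ℂ)
    else (X (2 : Fin 3) : MvPolynomial (Fin 3) ℂ) ^ ((k : ℕ) - 1) with hpoly
  set Bfam : Fin n → (MvPolynomial (Fin 3) ℂ ⧸ I) := fun k => Ideal.Quotient.mk I (poly k)
    with hBfam
  have mkzero : ∀ p : MvPolynomial (Fin 3) ℂ, p ∈ I → Ideal.Quotient.mk I p = 0 := by
    intro p hp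
    rwa [Ideal.Quotient.eq_zero_iff_mem]
  have mksmul : ∀ (c : ℂ) (p : MvPolynomial (Fin 3) ℂ),
      Ideal.Quotient.mk I (c • p) = c • Ideal.Quotient.mk I p := by
    intro c p
    rw [← Ideal.Quotient.mkₐ_eq_mk ℂ I]
    exact map_smul _ c p
  -- values of Lmap on the family
  have hLpoly : ∀ k : Fin n, Lmap n (poly k) = Pi.single k 1 := by
    intro k
    by_cases hk0 : (k : ℕ) = 0
    · have h1 : poly k = monomial 0 1 := by
        simp [hpoly, hk0, MvPolynomial.monomial_zero']
      rw [h1, Lmap_monomial]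
      funext j
      simp only [ffun, gfun, Finsupp.coe_zero, Pi.zero_apply]
      simp [Pi.single_apply, Fin.ext_iff, hk0, eq_comm]
    · by_cases hk1 : (k : ℕ) = 1
      · have h1 : poly k = monomial (Finsupp.single 2 0 + Finsupp.single 1 1) 1 := by
          simp [hpoly, hk0, hk1, Xmono]
        rw [h1, Lmap_monomial]
        funext j
        simp only [ffun, gfun, sapp, Finsupp.single_apply, Fin.reduceEq, reduceIte,
          add_zero, zero_add, Finsupp.single_zero, Finsupp.coe_zero, Pi.zero_apply]
        simp [Pi.single_apply, Fin.ext_iff, hk1, eq_comm]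
      · have h1 : poly k = monomial (Finsupp.single 2 ((k : ℕ) - 1)) 1 := by
          simp [hpoly, hk0, hk1, Xmonopow]
        rw [h1, Lmap_monomial]
        funext j
        have hk2 : 2 ≤ (k : ℕ) := by omega
        have hkn : (k : ℕ) ≤ n - 1 := by have := k.isLt; omega
        simp only [ffun, gfun, Finsupp.single_apply, Fin.reduceEq, reduceIte,
          Finsupp.single_eq_same]
        rw [Pi.single_apply]
        split_ifs <;> first | rfl | omega |
          (exfalso; simp_all [Fin.ext_iff]; omega)
  -- linear independence
  have hli : LinearIndependent ℂ Bfam := by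
    rw [Fintype.linearIndependent_iff]
    intro g hg
    have hmk : Ideal.Quotient.mk I (∑ i, g i • poly i) = 0 := by
      have : Ideal.Quotient.mk I (∑ i, g i • poly i)
          = ∑ i, g i • Bfam i := by
        rw [hBfam]
        rw [map_sum]
        exact Finset.sum_congr rfl fun i _ => mksmul _ _
      rw [this, hg]
    have hmem : (∑ i, g i • poly i) ∈ I := by
      rwa [Ideal.Quotient.eq_zero_iff_mem] at hmk
    have hL : Lmap n (∑ i, g i • poly i) = 0 := Lmap_ideal n hn hmem
    rw [map_sum] at hL
    simp only [map_smul, hLpoly] at hL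
    intro i
    have := congrFun hL i
    simp only [Finset.sum_apply, Pi.smul_apply, Pi.single_apply, Pi.zero_apply,
      smul_eq_mul, mul_ite, mul_one, mul_zero] at this
    rwa [Finset.sum_ite_eq Finset.univ i g, if_pos (Finset.mem_univ i)] at this
  -- spanning
  have hmono : ∀ d : Fin 3 →₀ ℕ,
      Ideal.Quotient.mk I (monomial d 1) ∈ Submodule.span ℂ (Set.range Bfam) := by
    intro d
    rw [mono3]
    by_cases ha : d 0 = 0
    · rw [ha, pow_zero, one_mul]
      by_cases hb : d 1 = 0
      · rw [hb, pow_zero, one_mul]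
        by_cases hc : d 2 ≤ n - 2
        · by_cases hc0 : d 2 = 0
          · rw [hc0, pow_zero]
            refine Submodule.subset_span ⟨⟨0, by omega⟩, ?_⟩
            simp only [hBfam, hpoly]
            simp
          · refine Submodule.subset_span ⟨⟨d 2 + 1, by omega⟩, ?_⟩
            simp only [hBfam, hpoly]
            congr 1
            rw [if_neg (Nat.succ_ne_zero _), if_neg (by simpa using hc0)]
            congr 1
        · have h2 : ((X 2 : MvPolynomial (Fin 3) ℂ)) ^ (d 2) ∈ I := by
            obtain ⟨e, he⟩ : ∃ e, d 2 = e + (n - 1) := ⟨d 2 - (n - 1), by omega⟩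
            rw [he, pow_add]
            exact Ideal.mul_mem_left _ _ htn1
          rw [mkzero _ h2]
          exact Submodule.zero_mem _
      · by_cases hc : d 2 = 0
        · rw [hc, pow_zero, mul_one]
          by_cases hb1 : d 1 = 1
          · rw [hb1, pow_one]
            refine Submodule.subset_span ⟨⟨1, by omega⟩, ?_⟩
            simp only [hBfam, hpoly]
            simp
          · by_cases hb2 : d 1 = 2
            · have hrel : Ideal.Quotient.mk I ((X 1 : MvPolynomial (Fin 3) ℂ) ^ 2)
                  = - Ideal.Quotient.mk I ((X 2 : MvPolynomial (Fin 3) ℂ) ^ (n - 2)) := by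
                have h0 : Ideal.Quotient.mk I ((X 1 : MvPolynomial (Fin 3) ℂ) ^ 2
                    + (X 2) ^ (n - 2)) = 0 := mkzero _ hg3mem
                rw [map_add] at h0
                linear_combination h0
              rw [hb2, hrel]
              apply Submodule.neg_mem
              refine Submodule.subset_span ⟨⟨n - 1, by omega⟩, ?_⟩
              simp only [hBfam, hpoly]
              congr 1
              rw [if_neg (by omega), if_neg (by omega)]
              congr 1
            · have h2 : ((X 1 : MvPolynomial (Fin 3) ℂ)) ^ (d 1) ∈ I := by
                obtain ⟨e, he⟩ : ∃ e, d 1 = e + 3 := ⟨d 1 - 3, by omega⟩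
                rw [he, pow_add]
                exact Ideal.mul_mem_left _ _ hv3
              rw [mkzero _ h2]
              exact Submodule.zero_mem _
        · have h2 : ((X 1 : MvPolynomial (Fin 3) ℂ)) ^ (d 1) * (X 2) ^ (d 2) ∈ I := by
            obtain ⟨b', hb'⟩ : ∃ b', d 1 = b' + 1 := ⟨d 1 - 1, by omega⟩
            obtain ⟨c', hc'⟩ : ∃ c', d 2 = c' + 1 := ⟨d 2 - 1, by omega⟩
            rw [hb', hc',
              show ((X 1 : MvPolynomial (Fin 3) ℂ)) ^ (b' + 1) * (X 2) ^ (c' + 1)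
                = (X 1 ^ b' * X 2 ^ c') * (X 1 * X 2) by ring]
            exact Ideal.mul_mem_left _ _ hvtmem
          rw [mkzero _ h2]
          exact Submodule.zero_mem _
    · have h2 : ((X 0 : MvPolynomial (Fin 3) ℂ)) ^ (d 0) * (X 1) ^ (d 1) * (X 2) ^ (d 2) ∈ I := by
        obtain ⟨a', ha'⟩ : ∃ a', d 0 = a' + 1 := ⟨d 0 - 1, by omega⟩
        rw [ha',
          show ((X 0 : MvPolynomial (Fin 3) ℂ)) ^ (a' + 1) * (X 1) ^ (d 1) * (X 2) ^ (d 2)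
            = (X 0 ^ a' * X 1 ^ (d 1) * X 2 ^ (d 2)) * X 0 by ring]
        exact Ideal.mul_mem_left _ _ hX0mem
      rw [mkzero _ h2]
      exact Submodule.zero_mem _
  have hspan : ⊤ ≤ Submodule.span ℂ (Set.range Bfam) := by
    intro x _
    obtain ⟨p, rfl⟩ := Ideal.Quotient.mk_surjective (I := I) x
    rw [MvPolynomial.as_sum p, map_sum]
    apply Submodule.sum_mem
    intro d _
    have hsc : (monomial d (coeff d p) : MvPolynomial (Fin 3) ℂ)
        = (coeff d p) • monomial d 1 := by
      rw [MvPolynomial.smul_monomial, smul_eq_mul, mul_one]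
    rw [hsc, mksmul]
    exact Submodule.smul_mem _ _ (hmono d)
  letI Bas : Module.Basis (Fin n) ℂ (MvPolynomial (Fin 3) ℂ ⧸ I) := Module.Basis.mk hli hspan
  constructor
  · exact ⟨Bas, fun k => by rw [Module.Basis.mk_apply]⟩
  · rw [Module.finrank_eq_card_basis Bas, Fintype.card_fin]
end
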